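/- arXiv:2601.21423 — 3 statements merged into one kernel-verified Lean document; each statement's English description precedes it below -/
import Mathlib

section
/- Let A = {a_1, ..., a_{k_1}} and B = {b_1, ..., b_{k_2}} be stamp bases with 1 ∈ A and 1 ∈ B, with ranges n_1 = n_{s_1}(A) and n_2 = n_{s_2}(B). Define C = A ∪ (n_1+1)·B (all elements of B multiplied by n_1+1). Then n_{s_1+s_2}(C) ≥ (n_1 + 1)(n_2 + 1) - 1. -/
/-- `i` is a sum of at most `s` elements of `A` (with repetition). -/
def Reachable (A : Finset ℕ) (s i : ℕ) : Prop :=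
  ∃ f : ℕ → ℕ, (∑ x ∈ A, f x) ≤ s ∧ (∑ x ∈ A, f x * x) = i

/-- The s-range of a stamp basis `A`. -/
noncomputable def srange (A : Finset ℕ) (s : ℕ) : ℕ :=
  sSup {n | ∀ i, 1 ≤ i → i ≤ n → Reachable A s i}

/-- The extremal s-range over bases of `k` distinct positive denominations. -/
noncomputable def exrange (k s : ℕ) : ℕ :=
  sSup {n | ∃ A : Finset ℕ, A.card = k ∧ (∀ a ∈ A, 0 < a) ∧ n = srange A s}

lemma reachable_zero (A : Finset ℕ) (s : ℕ) : Reachable A s 0 :=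
  ⟨fun _ => 0, by simp, by simp⟩

lemma reachable_le (A : Finset ℕ) (s i : ℕ) (h : Reachable A s i) :
    i ≤ s * A.sup id := by
  obtain ⟨f, hf, hi⟩ := h
  calc i = ∑ x ∈ A, f x * x := hi.symm
    _ ≤ ∑ x ∈ A, f x * A.sup id := Finset.sum_le_sum fun x hx =>
        Nat.mul_le_mul_left _ (Finset.le_sup (f := id) hx)
    _ = (∑ x ∈ A, f x) * A.sup id := (Finset.sum_mul ..).symm
    _ ≤ s * A.sup id := Nat.mul_le_mul_right _ hf

lemma srange_bdd (A : Finset ℕ) (s : ℕ) :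
    BddAbove {n | ∀ i, 1 ≤ i → i ≤ n → Reachable A s i} := by
  refine ⟨s * A.sup id, fun n hn => ?_⟩
  by_contra h
  push_neg at h
  have h1 := hn (s * A.sup id + 1) (by omega) (by omega)
  have h2 := reachable_le A s _ h1
  omega

lemma srange_spec (A : Finset ℕ) (s : ℕ) :
    ∀ i, 1 ≤ i → i ≤ srange A s → Reachable A s i :=
  Nat.sSup_mem ⟨0, by intro i h1 h0; omega⟩ (srange_bdd A s)

lemma reachable_union_scaled (A B : Finset ℕ) (m s₁ s₂ r q : ℕ) (hm : 0 < m)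
    (hr : Reachable A s₁ r) (hq : Reachable B s₂ q) :
    Reachable (A ∪ B.image (fun b => m * b)) (s₁ + s₂) (m * q + r) := by
  obtain ⟨f, hf, hfr⟩ := hr
  obtain ⟨g, hg, hgq⟩ := hq
  set B' := B.image (fun b => m * b) with hB'
  set C := A ∪ B' with hC
  have hinj : ∀ b₁ ∈ B, ∀ b₂ ∈ B, m * b₁ = m * b₂ → b₁ = b₂ := by
    intro b₁ _ b₂ _ h
    exact Nat.eq_of_mul_eq_mul_left hm h
  have hCA : C ∩ A = A := Finset.inter_eq_right.mpr Finset.subset_union_left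
  have hCB : C ∩ B' = B' := Finset.inter_eq_right.mpr Finset.subset_union_right
  refine ⟨fun x => (if x ∈ A then f x else 0) + (if x ∈ B' then g (x / m) else 0), ?_, ?_⟩
  · rw [Finset.sum_add_distrib, Finset.sum_ite_mem, Finset.sum_ite_mem, hCA, hCB,
      Finset.sum_image hinj]
    have : ∀ b ∈ B, g (m * b / m) = g b := by
      intro b _; rw [Nat.mul_div_cancel_left b hm]
    rw [Finset.sum_congr rfl this]
    exact add_le_add hf hg
  · have split : ∀ x, ((if x ∈ A then f x else 0) + (if x ∈ B' then g (x / m) else 0)) * x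
        = (if x ∈ A then f x * x else 0) + (if x ∈ B' then g (x / m) * x else 0) := by
      intro x
      split_ifs <;> ring
    rw [Finset.sum_congr rfl (fun x _ => split x), Finset.sum_add_distrib,
      Finset.sum_ite_mem, Finset.sum_ite_mem, hCA, hCB, Finset.sum_image hinj]
    have : ∀ b ∈ B, g (m * b / m) * (m * b) = m * (g b * b) := by
      intro b _; rw [Nat.mul_div_cancel_left b hm]; ring
    rw [Finset.sum_congr rfl this, ← Finset.mul_sum]
    have hgq' : ∑ b ∈ B, g b * b = q := hgq
    rw [hgq', hfr]
    omega

theorem mrose_construction (A B : Finset ℕ) (s₁ s₂ : ℕ)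
    (hs₁ : 0 < s₁) (hs₂ : 0 < s₂)
    (hA1 : 1 ∈ A) (hB1 : 1 ∈ B)
    (hApos : ∀ a ∈ A, 0 < a) (hBpos : ∀ b ∈ B, 0 < b) :
    srange (A ∪ B.image (fun b => (srange A s₁ + 1) * b)) (s₁ + s₂)
      ≥ (srange A s₁ + 1) * (srange B s₂ + 1) - 1 := by
  set n₁ := srange A s₁ with hn₁
  set n₂ := srange B s₂ with hn₂
  set m := n₁ + 1 with hm
  have hmpos : 0 < m := by omega
  have hN : (n₁ + 1) * (n₂ + 1) - 1 = n₂ * m + n₁ := by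
    have : (n₁ + 1) * (n₂ + 1) = n₂ * m + n₁ + 1 := by rw [hm]; ring
    omega
  rw [hN]
  apply le_csSup (srange_bdd _ _)
  intro i hi1 hiN
  have hqr := Nat.div_add_mod i m
  set q := i / m with hqdef
  set r := i % m with hrdef
  have hr : r ≤ n₁ := by
    have := Nat.mod_lt i hmpos
    omega
  have hq : q ≤ n₂ := by
    have hlt : i < (n₂ + 1) * m := by
      have : (n₂ + 1) * m = n₂ * m + m := by ring
      omega
    have := (Nat.div_lt_iff_lt_mul hmpos).mpr hlt
    omega
  have hRr : Reachable A s₁ r := by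
    rcases Nat.eq_zero_or_pos r with h0 | h0
    · rw [h0]; exact reachable_zero A s₁
    · exact srange_spec A s₁ r h0 hr
  have hRq : Reachable B s₂ q := by
    rcases Nat.eq_zero_or_pos q with h0 | h0
    · rw [h0]; exact reachable_zero B s₂
    · exact srange_spec B s₂ q h0 hq
  have := reachable_union_scaled A B m s₁ s₂ r q hmpos hRr hRq
  rwa [hqr] at this
end

section
/- If k = 2^{i+j} and s = 2^i (so k ≥ s), then the extremal s-range satisfies n_s(k) ≥ (1 + k/s)^s - 1. -/
/-!
Take the `m * s` stamps `d * (m + 1) ^ t` with `1 ≤ d ≤ m` and `t < s`. Every `n < (m + 1) ^ s`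
has at most `s` nonzero digits in base `m + 1`, and the digit `d` in position `t` is paid by the
single stamp `d * (m + 1) ^ t`; hence `n_s(m s) ≥ (m + 1) ^ s - 1`. With `m = k / s = 2 ^ j` this is
the claim. The suprema in `srange` and `exrange` are genuine maxima because a basis `A` reaches at
most `(s + 1) ^ A.card` numbers with `s` stamps.
-/

open Finset

namespace Reachable

lemma zero (A : Finset ℕ) (s : ℕ) : Reachable A s 0 :=
  ⟨fun _ => 0, by simp, by simp⟩

lemma mono {A : Finset ℕ} {s s' i : ℕ} (h : Reachable A s i) (hs : s ≤ s') : Reachable A s' i :=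
  let ⟨f, hf, hfi⟩ := h
  ⟨f, hf.trans hs, hfi⟩

lemma add_mem {A : Finset ℕ} {s i a : ℕ} (h : Reachable A s i) (ha : a ∈ A) :
    Reachable A (s + 1) (i + a) := by
  obtain ⟨f, hf, rfl⟩ := h
  refine ⟨fun x => f x + if x = a then 1 else 0, ?_, ?_⟩
  · rw [sum_add_distrib, sum_ite_eq' A a (fun _ => 1), if_pos ha]
    omega
  · simp only [add_mul, ite_mul, one_mul, zero_mul, sum_add_distrib, sum_ite_eq', if_pos ha]

end Reachable

lemma exists_fin_coeffs_of_reachable {A : Finset ℕ} {s i : ℕ} (h : Reachable A s i) :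
    ∃ c : A → Fin (s + 1), ∑ x : A, (c x : ℕ) * x = i := by
  obtain ⟨f, hf, rfl⟩ := h
  have hle : ∀ x ∈ A, f x ≤ s := fun x hx =>
    (single_le_sum (fun _ _ => Nat.zero_le _) hx).trans hf
  exact ⟨fun x => ⟨f x, Nat.lt_succ_of_le (hle x x.2)⟩, sum_coe_sort A (fun x => f x * x)⟩

lemma le_pow_card_of_forall_reachable {A : Finset ℕ} {s n : ℕ}
    (h : ∀ i, 1 ≤ i → i ≤ n → Reachable A s i) : n ≤ (s + 1) ^ A.card := by
  classical
  have hsurj : Set.SurjOn (fun c : A → Fin (s + 1) => ∑ x : A, (c x : ℕ) * x)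
      (univ : Finset (A → Fin (s + 1))) (Icc 1 n) := by
    intro i hi
    rw [coe_Icc, Set.mem_Icc] at hi
    obtain ⟨c, hc⟩ := exists_fin_coeffs_of_reachable (h i hi.1 hi.2)
    exact ⟨c, mem_coe.2 (mem_univ c), hc⟩
  simpa [Fintype.card_fun] using card_le_card_of_surjOn _ hsurj

lemma le_srange_of_forall_reachable {A : Finset ℕ} {s n : ℕ}
    (h : ∀ i, 1 ≤ i → i ≤ n → Reachable A s i) : n ≤ srange A s :=
  le_csSup ⟨(s + 1) ^ A.card, fun _ => le_pow_card_of_forall_reachable⟩ h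

lemma srange_le_pow_card (A : Finset ℕ) (s : ℕ) : srange A s ≤ (s + 1) ^ A.card :=
  csSup_le ⟨0, fun _ h1 h0 => absurd (h1.trans h0) (by omega)⟩
    fun _ => le_pow_card_of_forall_reachable

lemma srange_le_exrange {A : Finset ℕ} (hA : ∀ a ∈ A, 0 < a) (s : ℕ) :
    srange A s ≤ exrange A.card s := by
  refine le_csSup ⟨(s + 1) ^ A.card, ?_⟩ ⟨A, rfl, hA, rfl⟩
  rintro _ ⟨B, hB, -, rfl⟩
  exact hB ▸ srange_le_pow_card B s

def stampBasis (m s : ℕ) : Finset ℕ :=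
  (Icc 1 m ×ˢ range s).image fun p => p.1 * (m + 1) ^ p.2

lemma mem_stampBasis {m s d t : ℕ} (hd : d ∈ Icc 1 m) (ht : t < s) :
    d * (m + 1) ^ t ∈ stampBasis m s :=
  mem_image.2 ⟨(d, t), mem_product.2 ⟨hd, mem_range.2 ht⟩, rfl⟩

lemma pos_of_mem_stampBasis {m s a : ℕ} (ha : a ∈ stampBasis m s) : 0 < a := by
  obtain ⟨⟨d, t⟩, hp, rfl⟩ := mem_image.1 ha
  have hd : 1 ≤ d := (mem_Icc.1 (mem_product.1 hp).1).1
  positivity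

lemma log_mul_pow_eq {m d t : ℕ} (hd : d ∈ Icc 1 m) : Nat.log (m + 1) (d * (m + 1) ^ t) = t := by
  obtain ⟨hd1, hdm⟩ := mem_Icc.1 hd
  apply Nat.log_eq_of_pow_le_of_lt_pow
  · exact Nat.le_mul_of_pos_left _ hd1
  · rw [pow_succ']
    exact Nat.mul_lt_mul_of_pos_right (Nat.lt_succ_of_le hdm) (by positivity)

lemma card_stampBasis (m s : ℕ) : (stampBasis m s).card = m * s := by
  rw [stampBasis, card_image_of_injOn, card_product, Nat.card_Icc, card_range, Nat.add_sub_cancel]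
  rintro ⟨d, t⟩ hp ⟨d', t'⟩ hp' (h : d * (m + 1) ^ t = d' * (m + 1) ^ t')
  have hd := (mem_product.1 hp).1
  have hd' := (mem_product.1 hp').1
  have ht : t = t' := by rw [← log_mul_pow_eq (t := t) hd, h, log_mul_pow_eq hd']
  subst ht
  exact Prod.ext (Nat.eq_of_mul_eq_mul_right (by positivity) h) rfl

/-- Base-`(m + 1)` expansion: the leading digit `n / (m + 1) ^ t` costs one stamp. -/
lemma reachable_stampBasis_of_lt_pow {m s t n : ℕ} (ht : t ≤ s) (hn : n < (m + 1) ^ t) :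
    Reachable (stampBasis m s) t n := by
  induction t generalizing n with
  | zero => simpa [Nat.lt_one_iff.1 hn] using Reachable.zero _ 0
  | succ t ih =>
    have hbase : 0 < (m + 1) ^ t := by positivity
    have hrest := ih (by omega) (Nat.mod_lt n hbase)
    have hdigit : n / (m + 1) ^ t ≤ m := by
      rw [← Nat.lt_succ_iff, Nat.div_lt_iff_lt_mul hbase, ← pow_succ']
      exact hn
    rw [← Nat.mod_add_div' n ((m + 1) ^ t)]
    rcases Nat.eq_zero_or_pos (n / (m + 1) ^ t) with h0 | hpos
    · rw [h0, zero_mul, add_zero]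
      exact hrest.mono t.le_succ
    · exact hrest.add_mem (mem_stampBasis (mem_Icc.2 ⟨hpos, hdigit⟩) (by omega))

lemma pow_sub_one_le_exrange (m s : ℕ) : (m + 1) ^ s - 1 ≤ exrange (m * s) s := by
  have hpow : 0 < (m + 1) ^ s := by positivity
  calc (m + 1) ^ s - 1 ≤ srange (stampBasis m s) s :=
        le_srange_of_forall_reachable fun _ _ hi =>
          reachable_stampBasis_of_lt_pow le_rfl (by omega)
    _ ≤ exrange (m * s) s :=
        card_stampBasis m s ▸ srange_le_exrange (fun _ => pos_of_mem_stampBasis) s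

theorem midpoint_lower_k_ge_s (i j k s : ℕ) (hk : k = 2 ^ (i + j)) (hs : s = 2 ^ i) :
    exrange k s ≥ (1 + k / s) ^ s - 1 := by
  have hk' : k = 2 ^ j * s := by rw [hk, hs, pow_add, mul_comm]
  have hks : k / s = 2 ^ j := by
    rw [hk', Nat.mul_div_cancel _ (hs ▸ Nat.two_pow_pos i)]
  rw [hks, add_comm, hk']
  exact pow_sub_one_le_exrange (2 ^ j) s
end

section
/- Assume Mrose's bound n_2(m) ≥ (2/7)·m^2 for all m. If k = 2^{i+j} and s = 2^{i+1} with q = k/s ≥ 1 a power of two, then n_s(k) ≥ (1 + (8/7)·q^2)^{s/2} - 1. -/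
lemma reachable_bound {A : Finset ℕ} {s i : ℕ} (h : Reachable A s i) : i ≤ s * A.sup id := by
  obtain ⟨f, hf, hsum⟩ := h
  calc i = ∑ x ∈ A, f x * x := hsum.symm
    _ ≤ ∑ x ∈ A, f x * A.sup id :=
        Finset.sum_le_sum (fun x hx => Nat.mul_le_mul_left _ (Finset.le_sup (f := id) hx))
    _ = (∑ x ∈ A, f x) * A.sup id := by rw [Finset.sum_mul]
    _ ≤ s * A.sup id := Nat.mul_le_mul_right _ hf

lemma srange_le {A : Finset ℕ} {k s : ℕ} (hcard : A.card = k) : srange A s ≤ (s+1)^k := by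
  classical
  set n := srange A s with hn
  have hreach := srange_spec A s
  let F : ℕ → (ℕ → ℕ) := fun i => if h : Reachable A s i then h.choose else fun _ => 0
  have hF : ∀ i, 1 ≤ i → i ≤ n → (∑ x ∈ A, F i x) ≤ s ∧ (∑ x ∈ A, F i x * x) = i := by
    intro i h1 h2
    have h := hreach i h1 h2
    simp only [F, dif_pos h]
    exact h.choose_spec
  have hFle : ∀ i, 1 ≤ i → i ≤ n → ∀ x ∈ A, F i x ≤ s := fun i h1 h2 x hx =>
    le_trans (Finset.single_le_sum (f := F i) (fun _ _ => Nat.zero_le _) hx) (hF i h1 h2).1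
  have key : (Finset.Icc 1 n).card ≤ (Finset.univ : Finset ({x // x ∈ A} → Fin (s+1))).card := by
    apply Finset.card_le_card_of_injOn (fun i a => ⟨min (F i a.1) s, by omega⟩)
    · intro i _; exact Finset.mem_univ _
    · intro i hi i' hi' hEq
      simp only [Finset.coe_Icc, Set.mem_Icc] at hi hi'
      have heq : ∀ x ∈ A, F i x = F i' x := by
        intro x hx
        have h := congrFun hEq ⟨x, hx⟩
        have h1 := hFle i hi.1 hi.2 x hx
        have h2 := hFle i' hi'.1 hi'.2 x hx
        simpa [Fin.ext_iff, Nat.min_eq_left h1, Nat.min_eq_left h2] using h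
      calc i = ∑ x ∈ A, F i x * x := (hF i hi.1 hi.2).2.symm
        _ = ∑ x ∈ A, F i' x * x := Finset.sum_congr rfl (fun x hx => by rw [heq x hx])
        _ = i' := (hF i' hi'.1 hi'.2).2
  have : n ≤ Fintype.card ({x // x ∈ A} → Fin (s+1)) := by
    simpa [Nat.card_Icc] using key
  simpa [Fintype.card_fun, Fintype.card_coe, hcard] using this

lemma exrange_bdd (k s : ℕ) :
    BddAbove {n | ∃ A : Finset ℕ, A.card = k ∧ (∀ a ∈ A, 0 < a) ∧ n = srange A s} := by
  refine ⟨(s+1)^k, fun n hn => ?_⟩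
  obtain ⟨A, hcard, _, rfl⟩ := hn
  exact srange_le hcard

lemma exrange_exists (k s : ℕ) :
    ∃ A : Finset ℕ, A.card = k ∧ (∀ a ∈ A, 0 < a) ∧ exrange k s = srange A s := by
  have hA0 : (Finset.image (· + 1) (Finset.range k)).card = k := by
    rw [Finset.card_image_of_injective _ (add_left_injective 1), Finset.card_range]
  have hne : {n | ∃ A : Finset ℕ, A.card = k ∧ (∀ a ∈ A, 0 < a) ∧ n = srange A s}.Nonempty := by
    refine ⟨srange (Finset.image (· + 1) (Finset.range k)) s,
      Finset.image (· + 1) (Finset.range k), hA0, ?_, rfl⟩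
    intro a ha
    obtain ⟨x, _, rfl⟩ := Finset.mem_image.mp ha
    omega
  exact Nat.sSup_mem hne (exrange_bdd k s)

lemma exists_superset (C : Finset ℕ) (hC : ∀ a ∈ C, 0 < a) (k : ℕ) (hk : C.card ≤ k) :
    ∃ D : Finset ℕ, C ⊆ D ∧ D.card = k ∧ ∀ a ∈ D, 0 < a := by
  classical
  set P := Finset.image (fun t => C.sup id + 1 + t) (Finset.range (k - C.card)) with hP
  have hdisj : Disjoint C P := by
    rw [Finset.disjoint_left]
    intro a ha haP
    obtain ⟨t, _, rfl⟩ := Finset.mem_image.mp haP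
    have := Finset.le_sup (f := id) ha
    simp only [id_eq] at this
    omega
  refine ⟨C ∪ P, Finset.subset_union_left, ?_, ?_⟩
  · rw [Finset.card_union_of_disjoint hdisj, hP,
      Finset.card_image_of_injective _ (fun a b h => by omega), Finset.card_range]
    omega
  · intro a ha
    rcases Finset.mem_union.mp ha with h | h
    · exact hC a h
    · obtain ⟨t, _, rfl⟩ := Finset.mem_image.mp h
      omega

lemma superadd (k1 k2 s1 s2 : ℕ) :
    (exrange k1 s1 + 1) * (exrange k2 s2 + 1) ≤ exrange (k1+k2) (s1+s2) + 1 := by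
  classical
  obtain ⟨A1, hc1, hp1, he1⟩ := exrange_exists k1 s1
  obtain ⟨A2, hc2, hp2, he2⟩ := exrange_exists k2 s2
  set n1 := srange A1 s1 with hn1
  set n2 := srange A2 s2 with hn2
  have h1 := srange_spec A1 s1
  have h2 := srange_spec A2 s2
  set N := n1 + 1 with hN
  set B := A2.image (fun a => N * a) with hB
  have hCpos : ∀ a ∈ A1 ∪ B, 0 < a := by
    intro a ha
    rcases Finset.mem_union.mp ha with h | h
    · exact hp1 a h
    · obtain ⟨b, hb, rfl⟩ := Finset.mem_image.mp h
      have := hp2 b hb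
      positivity
  have hCcard : (A1 ∪ B).card ≤ k1 + k2 := by
    calc (A1 ∪ B).card ≤ A1.card + B.card := Finset.card_union_le _ _
      _ ≤ k1 + k2 := by
          have hIm : B.card ≤ A2.card := hB ▸ Finset.card_image_le
          omega
  obtain ⟨D, hsub, hDcard, hDpos⟩ := exists_superset (A1 ∪ B) hCpos (k1+k2) hCcard
  have hA1D : A1 ⊆ D := (Finset.subset_union_left).trans hsub
  have hBD : B ⊆ D := (Finset.subset_union_right).trans hsub
  have hreach : ∀ m, 1 ≤ m → m ≤ N * (n2+1) - 1 → Reachable D (s1+s2) m := by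
    intro m hm1 hm2
    have hNpos : 0 < N := Nat.succ_pos _
    have hprodpos : 0 < N * (n2+1) := by positivity
    set r := m % N with hr
    set t := m / N with ht
    have hrle : r ≤ n1 := by have := Nat.mod_lt m hNpos; omega
    have htle : t ≤ n2 := by
      have hlt : m < N * (n2+1) := by omega
      have := Nat.div_lt_of_lt_mul hlt
      omega
    obtain ⟨g, hg1, hg2⟩ : ∃ g : ℕ → ℕ, (∑ x ∈ A1, g x) ≤ s1 ∧ (∑ x ∈ A1, g x * x) = r := by
      rcases Nat.eq_zero_or_pos r with h | h
      · exact ⟨fun _ => 0, by simp, by simp [h]⟩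
      · exact h1 r h hrle
    obtain ⟨g2, hh1, hh2⟩ : ∃ g2 : ℕ → ℕ, (∑ x ∈ A2, g2 x) ≤ s2 ∧ (∑ x ∈ A2, g2 x * x) = t := by
      rcases Nat.eq_zero_or_pos t with h | h
      · exact ⟨fun _ => 0, by simp, by simp [h]⟩
      · exact h2 t h htle
    refine ⟨fun x => (if x ∈ A1 then g x else 0) + (if x ∈ B then g2 (x / N) else 0), ?_, ?_⟩
    · have e1 : ∑ x ∈ D, (if x ∈ A1 then g x else 0) = ∑ x ∈ A1, g x := by
        rw [Finset.sum_ite_mem, Finset.inter_eq_right.mpr hA1D]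
      have e2 : ∑ x ∈ D, (if x ∈ B then g2 (x / N) else 0) = ∑ x ∈ B, g2 (x / N) := by
        rw [Finset.sum_ite_mem, Finset.inter_eq_right.mpr hBD]
      have e3 : ∑ x ∈ B, g2 (x / N) = ∑ a ∈ A2, g2 a := by
        rw [hB, Finset.sum_image (fun a _ b _ h => by
          exact Nat.eq_of_mul_eq_mul_left hNpos h)]
        exact Finset.sum_congr rfl (fun a _ => by rw [Nat.mul_div_cancel_left _ hNpos])
      rw [Finset.sum_add_distrib, e1, e2, e3]
      omega
    · have e1 : ∑ x ∈ D, (if x ∈ A1 then g x else 0) * x = ∑ x ∈ A1, g x * x := by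
        simp only [ite_mul, zero_mul]
        rw [Finset.sum_ite_mem, Finset.inter_eq_right.mpr hA1D]
      have e2 : ∑ x ∈ D, (if x ∈ B then g2 (x / N) else 0) * x = ∑ x ∈ B, g2 (x / N) * x := by
        simp only [ite_mul, zero_mul]
        rw [Finset.sum_ite_mem, Finset.inter_eq_right.mpr hBD]
      have e3 : ∑ x ∈ B, g2 (x / N) * x = N * t := by
        rw [hB, Finset.sum_image (fun a _ b _ h => by
          exact Nat.eq_of_mul_eq_mul_left hNpos h)]
        have : ∀ a ∈ A2, g2 ((N * a) / N) * (N * a) = N * (g2 a * a) := by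
          intro a _
          rw [Nat.mul_div_cancel_left _ hNpos]; ring
        rw [Finset.sum_congr rfl this, ← Finset.mul_sum, hh2]
      have hdm : N * t + r = m := by rw [ht, hr]; exact Nat.div_add_mod m N
      simp only [add_mul]
      rw [Finset.sum_add_distrib, e1, e2, e3, hg2]
      omega
  have hle1 : N * (n2+1) - 1 ≤ srange D (s1+s2) := le_csSup (srange_bdd D _) hreach
  have hle2 : srange D (s1+s2) ≤ exrange (k1+k2) (s1+s2) :=
    le_csSup (exrange_bdd _ _) ⟨D, hDcard, hDpos, rfl⟩
  have hprodpos : 0 < N * (n2+1) := by positivity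
  have : (exrange k1 s1 + 1) * (exrange k2 s2 + 1) = N * (n2 + 1) := by
    rw [he1, he2]
  omega

lemma iter_pow (c t : ℕ) : ∀ i : ℕ, (exrange c t + 1) ^ (2^i) ≤ exrange (2^i * c) (2^i * t) + 1 := by
  intro i
  induction i with
  | zero => simp
  | succ n ih =>
    have key := superadd (2^n*c) (2^n*c) (2^n*t) (2^n*t)
    calc (exrange c t + 1) ^ (2^(n+1))
        = ((exrange c t + 1) ^ (2^n)) ^ 2 := by rw [← pow_mul, pow_succ]
      _ ≤ (exrange (2^n*c) (2^n*t) + 1) ^ 2 := Nat.pow_le_pow_left ih 2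
      _ = (exrange (2^n*c) (2^n*t) + 1) * (exrange (2^n*c) (2^n*t) + 1) := sq _
      _ ≤ exrange (2^n*c + 2^n*c) (2^n*t + 2^n*t) + 1 := key
      _ = exrange (2^(n+1)*c) (2^(n+1)*t) + 1 := by ring_nf

theorem midpoint_two_lower (i j k s q : ℕ)
    (hbase : ∀ m : ℕ, (exrange m 2 : ℝ) ≥ (2 / 7) * (m : ℝ) ^ 2)
    (hk : k = 2 ^ (i + j)) (hs : s = 2 ^ (i + 1)) (hj : 1 ≤ j) (hq : q = k / s) :
    (exrange k s : ℝ) ≥ (1 + (8 / 7) * (q : ℝ) ^ 2) ^ (s / 2) - 1 := by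
  have hq' : q = 2 ^ (j-1) := by
    rw [hq, hk, hs, Nat.pow_div (by omega) (by norm_num)]
    congr 1; omega
  have h2q : 2 ^ j = 2 * q := by
    rw [hq', ← pow_succ']
    congr 1; omega
  have hk' : k = 2^i * 2^j := by rw [hk, pow_add]
  have hs' : s = 2^i * 2 := by rw [hs, pow_succ]
  have hsdiv : s / 2 = 2^i := by rw [hs', Nat.mul_div_cancel _ (by norm_num)]
  have hnat : (exrange (2^j) 2 + 1) ^ (2^i) ≤ exrange k s + 1 := by
    rw [hk', hs']; exact iter_pow (2^j) 2 i
  have hreal : ((exrange (2^j) 2 : ℝ) + 1) ^ (2^i) ≤ (exrange k s : ℝ) + 1 := by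
    exact_mod_cast hnat
  have hc : ((2^j : ℕ) : ℝ) = 2 * (q : ℝ) := by exact_mod_cast h2q
  have hbase' : (8/7 : ℝ) * (q:ℝ)^2 ≤ (exrange (2^j) 2 : ℝ) := by
    have h := hbase (2^j)
    rw [hc] at h
    nlinarith [h]
  have hpow : (1 + (8/7) * (q:ℝ)^2) ^ (2^i) ≤ ((exrange (2^j) 2 : ℝ) + 1) ^ (2^i) :=
    pow_le_pow_left₀ (by positivity) (by linarith) _
  rw [hsdiv]
  linarith [hpow.trans hreal]
end
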